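/- For every β̂ ∈ dom R, the vector ŵ ∈ ℝⁿ defined by ŵ_j := l_j'(x_jᵀβ̂) for j = 1, …, n satisfies D_h(ŵ, w⁰) ≤ γM². -/

import Mathlib

/-!
Each summand of `D_h(ŵ, w⁰)` is the Bregman distance of `lⱼ*` between `lⱼ'(b)` and `lⱼ'(0)`, where
`b = xⱼᵀβ̂`. The Fenchel–Young equality `l*(l'(t)) = t l'(t) - l(t)` and the inverse-function rule
`(l*)'(l'(t)) = t` turn it into the Bregman distance `l(0) - l(b) - l'(b)(0 - b)` of `lⱼ` itself,
which `γ`-smoothness bounds by `γ b² ≤ γ M²`.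
-/

/-- The convex conjugate of a univariate function. -/
noncomputable def conj (f : ℝ → ℝ) (w : ℝ) : ℝ :=
  sSup (Set.range fun s => w * s - f s)

/-- The Bregman distance associated with the separable reference function
`h(w) = (1/n) ∑ⱼ lⱼ*(wⱼ)`. -/
noncomputable def bregH (n : ℕ) (l : Fin n → ℝ → ℝ) (y x : Fin n → ℝ) : ℝ :=
  (1 / (n : ℝ)) * ∑ j, (conj (l j) (y j) - conj (l j) (x j)
    - deriv (conj (l j)) (x j) * (y j - x j))

open Set

section Conjugate

variable {f : ℝ → ℝ}

lemma ConvexOn.add_deriv_mul_sub_le (hc : ConvexOn ℝ univ f) (hd : Differentiable ℝ f)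
    (t s : ℝ) : f t + deriv f t * (s - t) ≤ f s := by
  rcases lt_trichotomy t s with hts | rfl | hst
  · have h := hc.deriv_le_slope (mem_univ t) (mem_univ s) hts (hd t)
    rw [slope_def_field, le_div_iff₀ (sub_pos.2 hts)] at h
    linarith
  · simp
  · have h := hc.slope_le_deriv (mem_univ s) (mem_univ t) hst (hd t)
    rw [slope_def_field, div_le_iff₀ (sub_pos.2 hst)] at h
    linarith

lemma conj_deriv_eq (hc : ConvexOn ℝ univ f) (hd : Differentiable ℝ f) (t : ℝ) :
    conj f (deriv f t) = t * deriv f t - f t := by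
  have hub : ∀ y ∈ range (fun s => deriv f t * s - f s), y ≤ t * deriv f t - f t := by
    rintro _ ⟨s, rfl⟩
    linarith [hc.add_deriv_mul_sub_le hd t s]
  exact le_antisymm (csSup_le ⟨_, t, rfl⟩ hub) (le_csSup ⟨_, hub⟩ ⟨t, by ring⟩)

/-- The difference quotient of `conj f` between `f'(t)` and `w = f'(s)` is squeezed between `t` and
`s`, and `s → t` as `w → f'(t)` because `f'` is a continuous strictly increasing function. -/
theorem hasDerivAt_conj_deriv (hsc : StrictConvexOn ℝ univ f) (hd : Differentiable ℝ f)
    (hcd : Continuous (deriv f)) (t : ℝ) : HasDerivAt (conj f) t (deriv f t) := by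
  have hc := hsc.convexOn
  have hmono : StrictMono (deriv f) :=
    strictMonoOn_univ.1 (hsc.strictMonoOn_deriv fun x _ => hd x)
  rw [hasDerivAt_iff_isLittleO, Asymptotics.isLittleO_iff]
  intro ε hε
  filter_upwards [Ioo_mem_nhds (hmono (sub_lt_self t hε)) (hmono (lt_add_of_pos_right t hε))]
    with w hw
  obtain ⟨s, hs, rfl⟩ :=
    intermediate_value_Icc (by linarith) hcd.continuousOn ⟨hw.1.le, hw.2.le⟩
  have hclose : |s - t| ≤ ε := abs_sub_le_iff.2 ⟨by linarith [hs.2], by linarith [hs.1]⟩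
  have hsign : 0 ≤ (s - t) * (deriv f s - deriv f t) := by
    rcases le_total s t with h | h
    · exact mul_nonneg_of_nonpos_of_nonpos (by linarith) (by linarith [hmono.monotone h])
    · exact mul_nonneg (by linarith) (by linarith [hmono.monotone h])
  have hts := hc.add_deriv_mul_sub_le hd t s
  have hst := hc.add_deriv_mul_sub_le hd s t
  rw [conj_deriv_eq hc hd, conj_deriv_eq hc hd, smul_eq_mul, Real.norm_eq_abs, Real.norm_eq_abs,
    abs_of_nonneg (by linarith)]
  calc _ ≤ (s - t) * (deriv f s - deriv f t) := by linarith
    _ = |s - t| * |deriv f s - deriv f t| := by rw [← abs_mul, abs_of_nonneg hsign]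
    _ ≤ ε * |deriv f s - deriv f t| := by gcongr

lemma conj_bregman_deriv_eq (hsc : StrictConvexOn ℝ univ f) (hd : Differentiable ℝ f)
    (hcd : Continuous (deriv f)) (s t : ℝ) :
    conj f (deriv f s) - conj f (deriv f t) - deriv (conj f) (deriv f t) * (deriv f s - deriv f t)
      = f t - f s - deriv f s * (t - s) := by
  rw [(hasDerivAt_conj_deriv hsc hd hcd t).deriv, conj_deriv_eq hsc.convexOn hd,
    conj_deriv_eq hsc.convexOn hd]
  ring

end Conjugate

lemma sub_sub_deriv_mul_le_of_abs_deriv_sub_le {f : ℝ → ℝ} {K : ℝ} (hd : Differentiable ℝ f)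
    (hK : 0 ≤ K) (hlip : ∀ a b, |deriv f a - deriv f b| ≤ K * |a - b|) (t s : ℝ) :
    f t - f s - deriv f s * (t - s) ≤ K * (t - s) ^ 2 := by
  set g : ℝ → ℝ := fun u => f u - deriv f s * u
  have hg : ∀ u, HasDerivAt g (deriv f u - deriv f s) u := fun u => by
    simpa using (hd u).hasDerivAt.fun_sub ((hasDerivAt_id' u).const_mul (deriv f s))
  have hbound : ∀ u ∈ uIcc s t, ‖deriv f u - deriv f s‖ ≤ K * |t - s| := fun u hu =>
    (hlip u s).trans (mul_le_mul_of_nonneg_left (abs_sub_left_of_mem_uIcc hu) hK)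
  have hmvt := (convex_uIcc s t).norm_image_sub_le_of_norm_hasDerivWithin_le
    (fun u _ => (hg u).hasDerivWithinAt) hbound left_mem_uIcc right_mem_uIcc
  rw [Real.norm_eq_abs, Real.norm_eq_abs] at hmvt
  calc _ = g t - g s := by simp only [g]; ring
    _ ≤ K * |t - s| * |t - s| := (le_abs_self _).trans hmvt
    _ = K * (t - s) ^ 2 := by rw [mul_assoc, ← sq, sq_abs]

lemma bregH_le_of_forall_le {n : ℕ} {l : Fin n → ℝ → ℝ} {y x : Fin n → ℝ} {C : ℝ} (hC : 0 ≤ C)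
    (h : ∀ j, conj (l j) (y j) - conj (l j) (x j) - deriv (conj (l j)) (x j) * (y j - x j) ≤ C) :
    bregH n l y x ≤ C :=
  calc bregH n l y x ≤ 1 / n * (n * C) := by
        unfold bregH
        gcongr
        exact (Finset.sum_le_card_nsmul _ _ _ fun j _ => h j).trans_eq (by simp)
    _ = ((n : ℝ)⁻¹ * n) * C := by ring
    _ ≤ C := mul_le_of_le_one_left hC inv_mul_le_one

theorem stmt2_general (n p : ℕ)
    (x : Fin n → Fin p → ℝ) (l : Fin n → ℝ → ℝ) (γ : ℝ) (hγ : 0 < γ)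
    (hdiff : ∀ j, Differentiable ℝ (l j))
    (hsc : ∀ j, StrictConvexOn ℝ Set.univ (l j))
    (hsmooth : ∀ j, ∀ a b : ℝ, |deriv (l j) a - deriv (l j) b| ≤ γ * |a - b|)
    (domR : Set (Fin p → ℝ))
    (M : ℝ) (hM : ∀ β ∈ domR, ∀ j, |∑ i, x j i * β i| ≤ M)
    (βhat : Fin p → ℝ) (hβ : βhat ∈ domR) :
    bregH n l (fun j => deriv (l j) (∑ i, x j i * βhat i)) (fun j => deriv (l j) 0)
      ≤ γ * M ^ 2 := by
  refine bregH_le_of_forall_le (by positivity) fun j => ?_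
  have hcd : Continuous (deriv (l j)) :=
    (LipschitzWith.of_dist_le' fun a b => by simpa only [Real.dist_eq] using hsmooth j a b).continuous
  rw [conj_bregman_deriv_eq (hsc j) (hdiff j) hcd]
  calc _ ≤ γ * (0 - ∑ i, x j i * βhat i) ^ 2 :=
        sub_sub_deriv_mul_le_of_abs_deriv_sub_le (hdiff j) hγ.le (hsmooth j) _ _
    _ ≤ γ * M ^ 2 := by
        rw [zero_sub, neg_sq, ← sq_abs]
        gcongr
        exact hM βhat hβ j

theorem stmt2 (n p : ℕ) (hn : 0 < n) (hp : 0 < p)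
    (x : Fin n → Fin p → ℝ) (l : Fin n → ℝ → ℝ) (γ : ℝ) (hγ : 0 < γ)
    (hdiff : ∀ j, Differentiable ℝ (l j))
    (hsc : ∀ j, StrictConvexOn ℝ Set.univ (l j))
    (hsmooth : ∀ j, ∀ a b : ℝ, |deriv (l j) a - deriv (l j) b| ≤ γ * |a - b|)
    (domR : Set (Fin p → ℝ)) (hbdd : Bornology.IsBounded domR)
    (hconv : Convex ℝ domR) (h0R : (0 : Fin p → ℝ) ∈ domR)
    (M : ℝ) (hM : ∀ β ∈ domR, ∀ j, |∑ i, x j i * β i| ≤ M)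
    (βhat : Fin p → ℝ) (hβ : βhat ∈ domR) :
    bregH n l (fun j => deriv (l j) (∑ i, x j i * βhat i)) (fun j => deriv (l j) 0)
      ≤ γ * M ^ 2 :=
  stmt2_general n p x l γ hγ hdiff hsc hsmooth domR M hM βhat hβ
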